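/- Let μ > 0 and α satisfy α + 2μ/3 > 0, and let ρ⁰, δ⁰ > 0. For y-dependent positive data, the principal symbol L₀(ξ) a = (μ/(ρ⁰δ⁰)) (A⁰ξ·ξ) a + ((μ+α)/(ρ⁰(δ⁰)²)) (B⁰ξ · a)(B⁰ξ), where A⁰ = (1/δ⁰)(B⁰)ᵀB⁰ and B⁰ is an invertible 3×3 real matrix with det-related δ⁰ > 0, is a symmetric positive definite operator on ℝ³: there exists c⁰ > 0 such that L₀(ξ)a·a ≥ c⁰|a|² for all unit vectors ξ ∈ ℝ³ and all a ∈ ℝ³. -/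
import Mathlib


open Matrix

/-- The principal symbol `L₀(ξ) a = (μ/(ρ⁰δ⁰)) (A⁰ξ·ξ) a + ((μ+α)/(ρ⁰(δ⁰)²)) (B⁰ξ·a) B⁰ξ`,
where `A⁰ = (1/δ⁰)(B⁰)ᵀB⁰`. -/
noncomputable def principalSymbol (μ α ρ δ : ℝ) (B : Matrix (Fin 3) (Fin 3) ℝ)
    (ξ a : Fin 3 → ℝ) : Fin 3 → ℝ :=
  ((μ / (ρ * δ)) * (((1 / δ) • (Bᵀ * B)).mulVec ξ ⬝ᵥ ξ)) • a
    + (((μ + α) / (ρ * δ ^ 2)) * (B.mulVec ξ ⬝ᵥ a)) • B.mulVec ξ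

lemma dp_self_nonneg (v : Fin 3 → ℝ) : 0 ≤ v ⬝ᵥ v :=
  Finset.sum_nonneg fun i _ => mul_self_nonneg (v i)

lemma aux_tmul (B : Matrix (Fin 3) (Fin 3) ℝ) (ξ : Fin 3 → ℝ) :
    (Bᵀ * B).mulVec ξ ⬝ᵥ ξ = B.mulVec ξ ⬝ᵥ B.mulVec ξ := by
  rw [← Matrix.mulVec_mulVec, Matrix.mulVec_transpose, ← Matrix.dotProduct_mulVec]

lemma aux_expand (μ α ρ δ : ℝ) (B : Matrix (Fin 3) (Fin 3) ℝ) (ξ a : Fin 3 → ℝ) :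
    principalSymbol μ α ρ δ B ξ a ⬝ᵥ a
      = μ / (ρ * δ ^ 2) * (B.mulVec ξ ⬝ᵥ B.mulVec ξ) * (a ⬝ᵥ a)
        + (μ + α) / (ρ * δ ^ 2) * (B.mulVec ξ ⬝ᵥ a) ^ 2 := by
  simp only [principalSymbol, add_dotProduct, smul_dotProduct, smul_eq_mul,
    Matrix.smul_mulVec, aux_tmul]
  field_simp

/-- Under the viscosity relations `μ > 0`, `α + 2μ/3 > 0` and with `ρ⁰, δ⁰ > 0` and `B⁰`
invertible, the principal symbol `L₀(ξ)` is symmetric and uniformly positive definite on `ℝ³`: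
there is `c⁰ > 0` with `L₀(ξ)a·a ≥ c⁰|a|²` for every unit vector `ξ` and every `a ∈ ℝ³`. -/
theorem statement5 (μ α ρ δ : ℝ) (hμ : 0 < μ) (hα : 0 < α + 2 * μ / 3)
    (hρ : 0 < ρ) (hδ : 0 < δ) (B : Matrix (Fin 3) (Fin 3) ℝ) (hB : B.det ≠ 0) :
    (∀ ξ a b : Fin 3 → ℝ,
        principalSymbol μ α ρ δ B ξ a ⬝ᵥ b = a ⬝ᵥ principalSymbol μ α ρ δ B ξ b) ∧
    ∃ c > 0, ∀ ξ a : Fin 3 → ℝ, ξ ⬝ᵥ ξ = 1 →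
        c * (a ⬝ᵥ a) ≤ principalSymbol μ α ρ δ B ξ a ⬝ᵥ a := by
  have hμα : 0 < μ + α := by linarith
  constructor
  · -- symmetry
    intro ξ a b
    simp only [principalSymbol, add_dotProduct, dotProduct_add, smul_dotProduct,
      dotProduct_smul, smul_eq_mul]
    rw [dotProduct_comm a b, dotProduct_comm a (B.mulVec ξ)]
    ring
  · -- positive definiteness
    set f : (Fin 3 → ℝ) → ℝ := fun ξ => B.mulVec ξ ⬝ᵥ B.mulVec ξ with hf
    have hfc : Continuous f := by
      simp only [hf, dotProduct, mulVec]
      fun_prop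
    set S : Set (Fin 3 → ℝ) := {ξ | ξ ⬝ᵥ ξ = 1} with hS
    have hScl : IsClosed S := by
      have : Continuous fun ξ : Fin 3 → ℝ => ξ ⬝ᵥ ξ := by
        simp only [dotProduct]; fun_prop
      exact isClosed_eq this continuous_const
    have hScpt : IsCompact S := by
      refine IsCompact.of_isClosed_subset (isCompact_univ_pi fun _ : Fin 3 => (isCompact_Icc : IsCompact (Set.Icc (-1:ℝ) 1))) hScl ?_
      intro ξ hξ
      rw [Set.mem_univ_pi]
      intro i
      have h1 : ξ i * ξ i ≤ 1 := by
        rw [hS] at hξ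
        have := Finset.single_le_sum (f := fun j => ξ j * ξ j)
          (fun j _ => mul_self_nonneg (ξ j)) (Finset.mem_univ i)
        simpa [dotProduct] using this.trans_eq hξ
      constructor <;> nlinarith
    have hne : S.Nonempty := by
      refine ⟨![1, 0, 0], ?_⟩
      simp [hS, dotProduct, Fin.sum_univ_three]
    obtain ⟨ξ₀, hξ₀S, hmin⟩ := hScpt.exists_isMinOn hne hfc.continuousOn
    have hf0 : 0 < f ξ₀ := by
      rcases lt_or_eq_of_le (dp_self_nonneg (B.mulVec ξ₀)) with h | h
      · exact h
      · exfalso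
        have hB0 : B.mulVec ξ₀ = 0 := dotProduct_self_eq_zero.mp h.symm
        have hBu : IsUnit B.det := isUnit_iff_ne_zero.mpr hB
        have : ξ₀ = 0 := by
          have h2 : B⁻¹.mulVec (B.mulVec ξ₀) = ξ₀ := by
            rw [Matrix.mulVec_mulVec, Matrix.nonsing_inv_mul B hBu, Matrix.one_mulVec]
          rw [hB0, Matrix.mulVec_zero] at h2
          exact h2.symm
        rw [hS] at hξ₀S
        simp [this] at hξ₀S
    refine ⟨μ / (ρ * δ ^ 2) * f ξ₀, by positivity, ?_⟩
    intro ξ a hξ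
    rw [aux_expand]
    have hfa : f ξ₀ ≤ f ξ := hmin hξ
    have haa : (0:ℝ) ≤ a ⬝ᵥ a := dp_self_nonneg a
    have hsq : (0:ℝ) ≤ (B.mulVec ξ ⬝ᵥ a) ^ 2 := sq_nonneg _
    have hc : (0:ℝ) < μ / (ρ * δ ^ 2) := by positivity
    have hc2 : (0:ℝ) ≤ (μ + α) / (ρ * δ ^ 2) := by positivity
    nlinarith [mul_le_mul_of_nonneg_right (mul_le_mul_of_nonneg_left hfa hc.le) haa,
      mul_nonneg hc2 hsq]
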